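/- arXiv:1601.01933 — 6 statements merged into one kernel-verified Lean document; each statement's English description precedes it below -/
import Mathlib

section
/- The number of integer solutions to q(x) = 1, where q is the quadratic form of the tree Aₙ, is exactly n(n+1). -/
/-- The quadratic form of the Coxeter tree `Aₙ`. -/
def qA (n : ℕ) (x : ℕ → ℤ) : ℤ :=
  (∑ i ∈ Finset.range n, (x i)^2) - ∑ i ∈ Finset.range (n-1), x i * x (i+1)

/-!
Put `x₋₁ = 0` and `cⱼ = xⱼ₋₁ - xⱼ` for `0 ≤ j ≤ n`. If `x` vanishes from index `n` on, then
`∑ cⱼ = -xₙ = 0` and `∑ cⱼ² = 2 q(x)`, and `x` is recovered from `c` by telescoping. An integer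
vector with sum `0` and square sum `2` is `e_a - e_b` with `a ≠ b`, so the solutions of `q(x) = 1`
correspond to the `(n + 1) n` ordered pairs of distinct indices in `{0, …, n}`.
-/

open Finset

def diffSeq (x : ℕ → ℤ) : ℕ → ℤ
  | 0 => -x 0
  | j + 1 => x j - x (j + 1)

/-- For `a < b` this is minus the indicator of `[a, b)`, for `b < a` the indicator of `[b, a)`:
the roots of `Aₙ`. -/
def rootA (a b : ℕ) (i : ℕ) : ℤ := (if b ≤ i then 1 else 0) - (if a ≤ i then 1 else 0)

theorem qA_succ_succ (n : ℕ) (x : ℕ → ℤ) :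
    qA (n + 2) x = qA (n + 1) x + x (n + 1) ^ 2 - x n * x (n + 1) := by
  simp only [qA, Nat.add_sub_cancel, show n + 2 - 1 = n + 1 from rfl, sum_range_succ _ (n + 1),
    sum_range_succ _ n]
  ring

theorem qA_succ_of_eq_zero {n : ℕ} {x : ℕ → ℤ} (hx : x n = 0) : qA (n + 1) x = qA n x := by
  cases n with
  | zero => simp [qA, hx]
  | succ n => rw [qA_succ_succ, hx]; ring

theorem sum_range_succ_diffSeq (x : ℕ → ℤ) (i : ℕ) :
    ∑ j ∈ range (i + 1), diffSeq x j = -x i := by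
  induction i with
  | zero => simp [diffSeq]
  | succ i ih => rw [sum_range_succ, ih, diffSeq]; ring

theorem sum_range_succ_diffSeq_sq (x : ℕ → ℤ) (n : ℕ) :
    ∑ j ∈ range (n + 1), diffSeq x j ^ 2 = 2 * qA (n + 1) x - x n ^ 2 := by
  induction n with
  | zero => simp [diffSeq, qA]; ring
  | succ n ih => rw [sum_range_succ, ih, qA_succ_succ, diffSeq]; ring

theorem sum_range_succ_diffSeq_sq_of_eq_zero {n : ℕ} {x : ℕ → ℤ} (hx : x n = 0) :
    ∑ j ∈ range (n + 1), diffSeq x j ^ 2 = 2 * qA n x := by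
  rw [sum_range_succ_diffSeq_sq, qA_succ_of_eq_zero hx, hx]; ring

theorem diffSeq_rootA (a b j : ℕ) :
    diffSeq (rootA a b) j = (if j = a then 1 else 0) - (if j = b then 1 else 0) := by
  cases j <;> simp only [diffSeq, rootA] <;> split_ifs <;> omega

theorem rootA_injOn :
    {p : ℕ × ℕ | p.1 ≠ p.2}.InjOn fun p => rootA p.1 p.2 := by
  rintro ⟨a, b⟩ (hab : a ≠ b) ⟨a', b'⟩ - h
  -- `diffSeq (rootA a b)` takes the value `1` only at `a` and `-1` only at `b`
  have ha := congrFun (congrArg diffSeq h) a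
  have hb := congrFun (congrArg diffSeq h) b
  simp only [diffSeq_rootA] at ha hb
  ext <;> dsimp only <;> split_ifs at ha hb <;> omega

theorem exists_pair_of_sum_sq_eq_two {ι : Type*} {s : Finset ι} {c : ι → ℤ}
    (hsq : ∑ j ∈ s, c j ^ 2 = 2) :
    ∃ a ∈ s, ∃ b ∈ s, a ≠ b ∧ c a ^ 2 = 1 ∧ c b ^ 2 = 1 ∧
      ∀ j ∈ s, j ≠ a ∧ j ≠ b → c j = 0 := by
  classical
  set t := s.filter (c · ≠ 0)
  have hsq_t : ∑ j ∈ t, c j ^ 2 = 2 := by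
    rw [← hsq]; exact sum_filter_of_ne fun j _ h hc => h (by simp [hc])
  have hunit : ∀ j ∈ t, c j ^ 2 = 1 := by
    intro j hj
    have hle : c j ^ 2 ≤ 2 := hsq_t ▸ single_le_sum (fun i _ => sq_nonneg (c i)) hj
    have hne : c j ≠ 0 := (mem_filter.mp hj).2
    have : -1 ≤ c j ∧ c j ≤ 1 := by constructor <;> nlinarith
    exact sq_eq_one_iff.mpr (by omega)
  have hcard : t.card = 2 := by
    rw [sum_congr rfl hunit, sum_const, nsmul_eq_mul, mul_one] at hsq_t
    exact_mod_cast hsq_t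
  obtain ⟨a, b, hab, ht⟩ := card_eq_two.mp hcard
  have has : a ∈ t := by simp [ht]
  have hbs : b ∈ t := by simp [ht]
  refine ⟨a, (mem_filter.mp has).1, b, (mem_filter.mp hbs).1, hab, hunit a has, hunit b hbs,
    fun j hj hjab => ?_⟩
  by_contra hc
  have : j ∈ t := mem_filter.mpr ⟨hj, hc⟩
  simp [ht, hjab.1, hjab.2] at this

theorem exists_eq_ite_sub_ite_of_sum_sq_eq_two {ι : Type*} [DecidableEq ι] {s : Finset ι}
    {c : ι → ℤ} (hsum : ∑ j ∈ s, c j = 0) (hsq : ∑ j ∈ s, c j ^ 2 = 2) :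
    ∃ a ∈ s, ∃ b ∈ s, a ≠ b ∧
      ∀ j ∈ s, c j = (if j = a then 1 else 0) - (if j = b then 1 else 0) := by
  obtain ⟨a, ha, b, hb, hab, hca, -, hzero⟩ := exists_pair_of_sum_sq_eq_two hsq
  have hcb : c b = -c a := by
    rw [sum_eq_add_of_mem a b ha hb hab hzero] at hsum; omega
  have hform : ∀ p q, p ≠ q → c p = 1 → c q = -1 → (∀ j ∈ s, j ≠ p ∧ j ≠ q → c j = 0) →
      ∀ j ∈ s, c j = (if j = p then 1 else 0) - (if j = q then 1 else 0) := by
    intro p q hpq hp hq hzero j hj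
    by_cases hjp : j = p
    · simp [hjp, hp, hpq]
    by_cases hjq : j = q
    · simp [hjq, hq, hpq.symm]
    simp [hjp, hjq, hzero j hj ⟨hjp, hjq⟩]
  rcases sq_eq_one_iff.mp hca with h | h
  · exact ⟨a, ha, b, hb, hab, hform a b hab h (by omega) hzero⟩
  · exact ⟨b, hb, a, ha, hab.symm, hform b a hab.symm (by omega) h
      fun j hj hjab => hzero j hj hjab.symm⟩

theorem eq_of_diffSeq_eq {x y : ℕ → ℤ} {i : ℕ} (h : ∀ j ≤ i, diffSeq x j = diffSeq y j) :
    x i = y i := by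
  rw [← neg_neg (x i), ← neg_neg (y i), ← sum_range_succ_diffSeq, ← sum_range_succ_diffSeq,
    sum_congr rfl fun j hj => h j (Nat.lt_succ_iff.mp (mem_range.mp hj))]

theorem rootA_eq_zero {a b i : ℕ} (ha : a ≤ i) (hb : b ≤ i) : rootA a b i = 0 := by
  simp [rootA, ha, hb]

theorem qA_rootA {n a b : ℕ} (hab : a ≠ b) (ha : a ≤ n) (hb : b ≤ n) : qA n (rootA a b) = 1 := by
  have h := sum_range_succ_diffSeq_sq_of_eq_zero (rootA_eq_zero ha hb)
  have hsq : ∀ j, ((if j = a then (1 : ℤ) else 0) - (if j = b then 1 else 0)) ^ 2 =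
      (if j = a then 1 else 0) + (if j = b then 1 else 0) := by
    intro j; split_ifs <;> simp_all
  simp only [diffSeq_rootA, hsq, sum_add_distrib, sum_ite_eq', mem_range] at h
  rw [if_pos (by omega), if_pos (by omega)] at h
  omega

theorem setOf_qA_eq_one (n : ℕ) :
    {x : ℕ → ℤ | (∀ i, n ≤ i → x i = 0) ∧ qA n x = 1} =
      (fun p => rootA p.1 p.2) '' ((range (n + 1)).offDiag : Set (ℕ × ℕ)) := by
  ext x
  simp only [Set.mem_ofPred_eq, Set.mem_image, mem_coe, mem_offDiag, mem_range, Prod.exists]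
  constructor
  · rintro ⟨hsupp, hq⟩
    have hxn := hsupp n le_rfl
    obtain ⟨a, ha, b, hb, hab, hc⟩ :=
      exists_eq_ite_sub_ite_of_sum_sq_eq_two (s := range (n + 1)) (c := diffSeq x)
      (by rw [sum_range_succ_diffSeq, hxn, neg_zero])
      (by rw [sum_range_succ_diffSeq_sq_of_eq_zero hxn, hq, mul_one])
    rw [mem_range] at ha hb
    refine ⟨a, b, ⟨ha, hb, hab⟩, funext fun i => ?_⟩
    rcases lt_or_ge i n with hi | hi
    · exact eq_of_diffSeq_eq fun j hj => by
        rw [diffSeq_rootA, hc j (mem_range.mpr (by omega))]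
    · rw [hsupp i hi, rootA_eq_zero (by omega) (by omega)]
  · rintro ⟨a, b, ⟨ha, hb, hab⟩, rfl⟩
    exact ⟨fun i hi => rootA_eq_zero (by omega) (by omega), qA_rootA hab (by omega) (by omega)⟩

theorem qA_card_solutions_general (n : ℕ) :
    {x : ℕ → ℤ | (∀ i, n ≤ i → x i = 0) ∧ qA n x = 1}.ncard = n * (n + 1) := by
  have hinj : Set.InjOn (fun p : ℕ × ℕ => rootA p.1 p.2) (range (n + 1)).offDiag :=
    rootA_injOn.mono fun p hp => (mem_offDiag.mp hp).2.2
  rw [setOf_qA_eq_one, hinj.ncard_image, Set.ncard_coe_finset, offDiag_card, card_range,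
    ← Nat.mul_sub_one, Nat.add_sub_cancel, Nat.mul_comm]

theorem qA_card_solutions (n : ℕ) (hn : 1 ≤ n) :
    {x : ℕ → ℤ | (∀ i, n ≤ i → x i = 0) ∧ qA n x = 1}.ncard = n * (n + 1) :=
  qA_card_solutions_general n
end

section
/- The number of integer solutions to q(x) = 1, where q is the quadratic form of the tree Dₙ (n ≥ 4), is exactly 2n(n−1). -/
/-!
Put `y₀ = x₁ - x₂`, `y₁ = x₁ + x₂ - x₀`, `y₂ = x₀ - x₃` and `yₖ = xₖ - xₖ₊₁` for `k ≥ 3`. Then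
`∑ yₖ² = 2 q(x)`, and `x ↦ y` is a bijection of `ℤⁿ` onto the vectors with even coordinate sum
(the standard embedding of the root lattice of `Dₙ`). Since `yₖ² ≡ yₖ (mod 2)`, every `y` with
`∑ yₖ² = 2` has even coordinate sum, so the solutions of `q(x) = 1` correspond to the vectors
`±eᵢ ± eⱼ` with `i < j`, of which there are `4 · (n choose 2) = 2n(n - 1)`.
-/

/-- The quadratic form of the Coxeter tree `Dₙ` (0-based: vertex 0 adjacent to
vertices 1, 2, 3, and a chain 3—4—⋯—(n-1)). -/
def qD (n : ℕ) (x : ℕ → ℤ) : ℤ :=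
  (∑ i ∈ Finset.range n, (x i)^2) - x 0 * (x 1 + x 2 + x 3)
    - ∑ i ∈ Finset.Ico 3 (n-1), x i * x (i+1)

open Finset

theorem Finset.sum_range_eq_add_sum_Ico_three {M : Type*} [AddCommMonoid M] {n : ℕ} (hn : 3 ≤ n)
    (f : ℕ → M) : ∑ k ∈ range n, f k = f 0 + f 1 + f 2 + ∑ k ∈ Ico 3 n, f k := by
  rw [← sum_range_add_sum_Ico f hn]
  simp [sum_range_succ]

theorem qD_succ {n : ℕ} (hn : 4 ≤ n) (x : ℕ → ℤ) :
    qD (n + 1) x = qD n x + x n ^ 2 - x (n - 1) * x n := by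
  obtain ⟨m, rfl⟩ : ∃ m, n = m + 1 := ⟨n - 1, by omega⟩
  simp only [qD, Nat.add_sub_cancel, sum_range_succ, sum_Ico_succ_top (by omega : 3 ≤ m)]
  ring

def qDCoords (x : ℕ → ℤ) : ℕ → ℤ
  | 0 => x 1 - x 2
  | 1 => x 1 + x 2 - x 0
  | 2 => x 0 - x 3
  | k + 3 => x (k + 3) - x (k + 4)

-- The division by 2 is exact on vectors with even coordinate sum, the image of `qDCoords`.
def qDCoordsInv (n : ℕ) (y : ℕ → ℤ) : ℕ → ℤ
  | 0 => y 2 + ∑ j ∈ Ico 3 n, y j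
  | 1 => (∑ j ∈ range n, y j) / 2
  | 2 => (∑ j ∈ range n, y j) / 2 - y 0
  | k + 3 => ∑ j ∈ Ico (k + 3) n, y j

theorem qDCoords_of_three_le (x : ℕ → ℤ) {k : ℕ} (hk : 3 ≤ k) :
    qDCoords x k = x k - x (k + 1) := by
  obtain ⟨m, rfl⟩ := Nat.exists_eq_add_of_le' hk
  rfl

theorem qDCoordsInv_of_three_le (n : ℕ) (y : ℕ → ℤ) {k : ℕ} (hk : 3 ≤ k) :
    qDCoordsInv n y k = ∑ j ∈ Ico k n, y j := by
  obtain ⟨m, rfl⟩ := Nat.exists_eq_add_of_le' hk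
  rfl

theorem sum_sq_qDCoords_range {n : ℕ} (hn : 4 ≤ n) (x : ℕ → ℤ) :
    ∑ k ∈ range n, qDCoords x k ^ 2 = 2 * qD n x - 2 * x (n - 1) * x n + x n ^ 2 := by
  induction n, hn using Nat.le_induction with
  | base =>
    simp only [qD, qDCoords, sum_range_succ, range_one, sum_singleton, Nat.add_one_sub_one,
      Ico_self, sum_empty]
    ring
  | succ n hn ih =>
    rw [sum_range_succ, ih, qD_succ hn, qDCoords_of_three_le x (by omega), Nat.add_sub_cancel]
    ring

theorem sum_sq_qDCoords {n : ℕ} (hn : 4 ≤ n) {x : ℕ → ℤ} (hx : ∀ i, n ≤ i → x i = 0) :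
    ∑ k ∈ range n, qDCoords x k ^ 2 = 2 * qD n x := by
  rw [sum_sq_qDCoords_range hn, hx n le_rfl]
  ring

theorem qDCoords_eq_zero {n : ℕ} (hn : 3 ≤ n) {x : ℕ → ℤ} (hx : ∀ i, n ≤ i → x i = 0) {k : ℕ}
    (hk : n ≤ k) : qDCoords x k = 0 := by
  rw [qDCoords_of_three_le x (by omega), hx k hk, hx (k + 1) (by omega), sub_zero]

theorem qDCoordsInv_eq_zero {n : ℕ} (hn : 3 ≤ n) (y : ℕ → ℤ) {k : ℕ} (hk : n ≤ k) :
    qDCoordsInv n y k = 0 := by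
  rw [qDCoordsInv_of_three_le n y (by omega), Ico_eq_empty_of_le hk, sum_empty]

theorem sum_Ico_qDCoords {n : ℕ} {x : ℕ → ℤ} (hx : ∀ i, n ≤ i → x i = 0) {k : ℕ} (hk : 3 ≤ k) :
    ∑ j ∈ Ico k n, qDCoords x j = x k := by
  rcases le_total k n with hkn | hnk
  · calc ∑ j ∈ Ico k n, qDCoords x j = -∑ j ∈ Ico k n, (x (j + 1) - x j) := by
          rw [← sum_neg_distrib]
          exact sum_congr rfl fun j hj => by rw [qDCoords_of_three_le x (by grind), neg_sub]
      _ = x k := by rw [sum_Ico_sub x hkn, hx n le_rfl, zero_sub, neg_neg]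
  · rw [Ico_eq_empty_of_le hnk, sum_empty, hx k hnk]

theorem qDCoordsInv_qDCoords {n : ℕ} (hn : 3 ≤ n) {x : ℕ → ℤ} (hx : ∀ i, n ≤ i → x i = 0) :
    qDCoordsInv n (qDCoords x) = x := by
  have hsum : ∑ j ∈ range n, qDCoords x j = 2 * x 1 := by
    rw [sum_range_eq_add_sum_Ico_three hn, sum_Ico_qDCoords hx le_rfl]
    simp only [qDCoords.eq_1, qDCoords.eq_2, qDCoords.eq_3]
    ring
  funext k
  match k with
  | 0 => simp only [qDCoordsInv.eq_1, sum_Ico_qDCoords hx le_rfl, qDCoords.eq_3]; ring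
  | 1 => simp [qDCoordsInv.eq_2, hsum]
  | 2 => simp [qDCoordsInv.eq_3, hsum, qDCoords.eq_1]
  | k + 3 => rw [qDCoordsInv_of_three_le n _ (by omega), sum_Ico_qDCoords hx (by omega)]

theorem qDCoords_qDCoordsInv {n : ℕ} (hn : 3 ≤ n) {y : ℕ → ℤ} (hy : ∀ i, n ≤ i → y i = 0)
    (heven : Even (∑ j ∈ range n, y j)) : qDCoords (qDCoordsInv n y) = y := by
  obtain ⟨c, hc⟩ := heven
  have hhalf : (∑ j ∈ range n, y j) / 2 = c := by omega
  rw [sum_range_eq_add_sum_Ico_three hn] at hc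
  funext k
  match k with
  | 0 => simp only [qDCoords.eq_1, qDCoordsInv.eq_2, qDCoordsInv.eq_3, hhalf]; ring
  | 1 =>
    simp only [qDCoords.eq_2, qDCoordsInv.eq_1, qDCoordsInv.eq_2, qDCoordsInv.eq_3, hhalf]
    linarith
  | 2 => simp only [qDCoords.eq_3, qDCoordsInv.eq_1, qDCoordsInv_of_three_le n y le_rfl]; ring
  | k + 3 =>
    rw [qDCoords_of_three_le _ (by omega), qDCoordsInv_of_three_le n y (by omega),
      qDCoordsInv_of_three_le n y (by omega)]
    rcases lt_or_ge (k + 3) n with hkn | hnk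
    · rw [sum_eq_sum_Ico_succ_bot hkn]; ring
    · rw [Ico_eq_empty_of_le hnk, Ico_eq_empty_of_le (by omega), hy _ hnk]
      simp

theorem even_sum_sq_sub_sum {ι : Type*} (s : Finset ι) (y : ι → ℤ) :
    Even (∑ i ∈ s, y i ^ 2 - ∑ i ∈ s, y i) := by
  rw [← sum_sub_distrib]
  exact even_sum _ fun i _ => by simpa [sq, mul_sub] using Int.even_mul_pred_self (y i)

def vectorsOfNormSqTwo (n : ℕ) : Set (ℕ → ℤ) :=
  {y | (∀ k, n ≤ k → y k = 0) ∧ ∑ k ∈ range n, y k ^ 2 = 2}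

def signedPair (p : (ℕ × ℕ) × ℤ × ℤ) : ℕ → ℤ := Pi.single p.1.1 p.2.1 + Pi.single p.1.2 p.2.2

def signedPairIndex (n : ℕ) : Finset ((ℕ × ℕ) × ℤ × ℤ) :=
  {p ∈ range n ×ˢ range n | p.1 < p.2} ×ˢ ({-1, 1} ×ˢ {-1, 1})

theorem card_signedPairIndex (n : ℕ) : #(signedPairIndex n) = 2 * n * (n - 1) := by
  have hchoose : n.choose 2 * 2 = n * (n - 1) := by
    rw [Nat.choose_two_right, Nat.div_mul_cancel (Nat.even_mul_pred_self n).two_dvd]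
  rw [signedPairIndex, card_product, card_product_filter_lt, card_range, card_product,
    card_pair (by norm_num)]
  linarith

theorem signedPair_apply_ne_zero_iff {i j : ℕ} {s t : ℤ} (hij : i ≠ j) (hs : s ≠ 0) (ht : t ≠ 0)
    (k : ℕ) : signedPair ((i, j), s, t) k ≠ 0 ↔ k = i ∨ k = j := by
  by_cases hki : k = i
  · subst hki; simp [signedPair, hij, hs]
  · by_cases hkj : k = j
    · subst hkj; simp [signedPair, hki, ht]
    · simp [signedPair, hki, hkj]

theorem mem_signedPairIndex {n i j : ℕ} {s t : ℤ} :
    ((i, j), s, t) ∈ signedPairIndex n ↔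
      (i < j ∧ j < n) ∧ (s = -1 ∨ s = 1) ∧ (t = -1 ∨ t = 1) := by
  simp only [signedPairIndex, mem_product, mem_filter, mem_range, mem_insert, mem_singleton]
  omega

theorem injOn_signedPair (n : ℕ) : Set.InjOn signedPair (signedPairIndex n) := by
  rintro ⟨⟨i, j⟩, s, t⟩ hp ⟨⟨i', j'⟩, s', t'⟩ hp' h
  rw [mem_coe, mem_signedPairIndex] at hp hp'
  have hsupp : ∀ k, k = i ∨ k = j ↔ k = i' ∨ k = j' := fun k => by
    rw [← signedPair_apply_ne_zero_iff (s := s) (t := t) (by omega) (by omega) (by omega),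
      ← signedPair_apply_ne_zero_iff (s := s') (t := t') (by omega) (by omega) (by omega), h]
  obtain ⟨rfl, rfl⟩ : i = i' ∧ j = j' := by
    have := hsupp i; have := hsupp j; have := hsupp i'; have := hsupp j'; omega
  have hi := congrFun h i
  have hj := congrFun h j
  simp_all [signedPair, Ne.symm (Nat.ne_of_lt hp.1.1)]

theorem sum_sq_signedPair {i j : ℕ} (hij : i ≠ j) (s t : ℤ) (u : Finset ℕ) :
    ∑ k ∈ u, signedPair ((i, j), s, t) k ^ 2 =
      (if i ∈ u then s ^ 2 else 0) + (if j ∈ u then t ^ 2 else 0) := by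
  have hsq : ∀ k, signedPair ((i, j), s, t) k ^ 2 =
      (Pi.single i (s ^ 2) : ℕ → ℤ) k + (Pi.single j (t ^ 2) : ℕ → ℤ) k :=
    fun k => by by_cases hki : k = i <;> by_cases hkj : k = j <;> simp_all [signedPair]
  simp only [hsq, sum_add_distrib, sum_pi_single']

theorem signedPair_mem_vectorsOfNormSqTwo {n : ℕ} {p : (ℕ × ℕ) × ℤ × ℤ}
    (hp : p ∈ signedPairIndex n) : signedPair p ∈ vectorsOfNormSqTwo n := by
  obtain ⟨⟨i, j⟩, s, t⟩ := p
  obtain ⟨⟨hij, hjn⟩, hs, ht⟩ := mem_signedPairIndex.mp hp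
  refine ⟨fun k hk => ?_, ?_⟩
  · have hki : k ≠ i := by omega
    have hkj : k ≠ j := by omega
    simp [signedPair, hki, hkj]
  rw [sum_sq_signedPair hij.ne]
  rcases hs with rfl | rfl <;> rcases ht with rfl | rfl <;> simp [hjn, hij.trans hjn]

theorem apply_mem_of_mem_vectorsOfNormSqTwo {n : ℕ} {y : ℕ → ℤ} (hy : y ∈ vectorsOfNormSqTwo n)
    (k : ℕ) : y k = -1 ∨ y k = 0 ∨ y k = 1 := by
  rcases lt_or_ge k n with hk | hk
  · have : y k ^ 2 ≤ 2 := hy.2 ▸ single_le_sum (fun j _ => sq_nonneg (y j)) (mem_range.mpr hk)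
    have : y k ≤ 1 := by nlinarith
    have : -1 ≤ y k := by nlinarith
    omega
  · exact Or.inr (Or.inl (hy.1 k hk))

theorem card_filter_ne_zero_of_mem_vectorsOfNormSqTwo {n : ℕ} {y : ℕ → ℤ}
    (hy : y ∈ vectorsOfNormSqTwo n) : #{k ∈ range n | y k ≠ 0} = 2 := by
  have hcard : ((#{k ∈ range n | y k ≠ 0} : ℕ) : ℤ) = 2 := by
    rw [natCast_card_filter, ← hy.2]
    refine sum_congr rfl fun k _ => ?_
    rcases apply_mem_of_mem_vectorsOfNormSqTwo hy k with h | h | h <;> simp [h]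
  exact_mod_cast hcard

theorem exists_signedPair_eq {n : ℕ} {y : ℕ → ℤ} (hy : y ∈ vectorsOfNormSqTwo n) :
    ∃ p ∈ signedPairIndex n, signedPair p = y := by
  have hval := apply_mem_of_mem_vectorsOfNormSqTwo hy
  obtain ⟨i, j, hij, hsupp⟩ : ∃ i j, i < j ∧ {k ∈ range n | y k ≠ 0} = {i, j} := by
    obtain ⟨a, b, hab, hsupp⟩ := card_eq_two.mp (card_filter_ne_zero_of_mem_vectorsOfNormSqTwo hy)
    rcases hab.lt_or_gt with h | h
    · exact ⟨a, b, h, hsupp⟩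
    · exact ⟨b, a, h, hsupp.trans (pair_comm a b)⟩
  have hmem : ∀ k, (k < n ∧ y k ≠ 0) ↔ k = i ∨ k = j := fun k => by
    rw [← mem_range, ← mem_filter (p := fun k => y k ≠ 0), hsupp, mem_insert, mem_singleton]
  have hi := (hmem i).mpr (Or.inl rfl)
  have hj := (hmem j).mpr (Or.inr rfl)
  refine ⟨((i, j), y i, y j), mem_signedPairIndex.mpr ⟨⟨hij, hj.1⟩, ?_, ?_⟩, funext fun k => ?_⟩
  · have := hval i; omega
  · have := hval j; omega
  by_cases hki : k = i
  · simp [signedPair, hki, hij.ne]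
  by_cases hkj : k = j
  · simp [signedPair, hkj, hij.ne']
  have hk : y k = 0 := by
    by_contra h
    rcases lt_or_ge k n with hkn | hkn
    · exact absurd ((hmem k).mp ⟨hkn, h⟩) (by omega)
    · exact h (hy.1 k hkn)
  simp [signedPair, hki, hkj, hk]

theorem image_signedPair (n : ℕ) : signedPair '' signedPairIndex n = vectorsOfNormSqTwo n := by
  refine Set.Subset.antisymm (Set.image_subset_iff.mpr fun _ => signedPair_mem_vectorsOfNormSqTwo)
    fun y hy => ?_
  obtain ⟨p, hp, rfl⟩ := exists_signedPair_eq hy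
  exact ⟨p, hp, rfl⟩

theorem ncard_vectorsOfNormSqTwo (n : ℕ) : (vectorsOfNormSqTwo n).ncard = 2 * n * (n - 1) := by
  rw [← image_signedPair, (injOn_signedPair n).ncard_image, Set.ncard_coe_finset,
    card_signedPairIndex]

theorem bijOn_qDCoords {n : ℕ} (hn : 4 ≤ n) :
    Set.BijOn qDCoords {x | (∀ i, n ≤ i → x i = 0) ∧ qD n x = 1} (vectorsOfNormSqTwo n) := by
  have hright : ∀ y ∈ vectorsOfNormSqTwo n, qDCoords (qDCoordsInv n y) = y := by
    rintro y ⟨hy, hsum⟩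
    have heven : Even (∑ k ∈ range n, y k) :=
      (Int.even_sub.mp (even_sum_sq_sub_sum _ y)).mp (hsum ▸ even_two)
    exact qDCoords_qDCoordsInv (by omega) hy heven
  refine Set.InvOn.bijOn ⟨fun x hx => qDCoordsInv_qDCoords (by omega) hx.1, hright⟩ ?_ ?_
  · rintro x ⟨hx, hq⟩
    exact ⟨fun k => qDCoords_eq_zero (by omega) hx, by rw [sum_sq_qDCoords hn hx, hq, mul_one]⟩
  · intro y hy
    have hx : ∀ k, n ≤ k → qDCoordsInv n y k = 0 := fun k => qDCoordsInv_eq_zero (by omega) y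
    have hq := sum_sq_qDCoords hn hx
    rw [hright y hy, hy.2] at hq
    exact ⟨hx, by omega⟩

theorem qD_card_solutions (n : ℕ) (hn : 4 ≤ n) :
    {x : ℕ → ℤ | (∀ i, n ≤ i → x i = 0) ∧ qD n x = 1}.ncard = 2 * n * (n - 1) := by
  rw [(bijOn_qDCoords hn).ncard_eq, ncard_vectorsOfNormSqTwo]
end

section
/- The equation q(x) = 1 for the quadratic form q of E₆ has exactly 72 integer solutions. -/
/-- The quadratic form of the Coxeter tree `E₆`. -/
def qE6 (x : Fin 6 → ℤ) : ℤ :=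
  (∑ i, (x i)^2) - x 0 * (x 1 + x 2 + x 3) - x 2 * x 4 - x 3 * x 5

/-- The 72 roots of `E₆`. -/
def sols : List (Fin 6 → ℤ) := [
![-3,-2,-2,-2,-1,-1],
![-3,-1,-2,-2,-1,-1],
![-2,-1,-2,-2,-1,-1],
![-2,-1,-2,-1,-1,-1],
![-2,-1,-2,-1,-1,0],
![-2,-1,-1,-2,-1,-1],
![-2,-1,-1,-2,0,-1],
![-2,-1,-1,-1,-1,-1],
![-2,-1,-1,-1,-1,0],
![-2,-1,-1,-1,0,-1],
![-2,-1,-1,-1,0,0],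
![-1,-1,-1,-1,-1,-1],
![-1,-1,-1,-1,-1,0],
![-1,-1,-1,-1,0,-1],
![-1,-1,-1,-1,0,0],
![-1,-1,-1,0,-1,0],
![-1,-1,-1,0,0,0],
![-1,-1,0,-1,0,-1],
![-1,-1,0,-1,0,0],
![-1,-1,0,0,0,0],
![-1,0,-1,-1,-1,-1],
![-1,0,-1,-1,-1,0],
![-1,0,-1,-1,0,-1],
![-1,0,-1,-1,0,0],
![-1,0,-1,0,-1,0],
![-1,0,-1,0,0,0],
![-1,0,0,-1,0,-1],
![-1,0,0,-1,0,0],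
![-1,0,0,0,0,0],
![0,-1,0,0,0,0],
![0,0,-1,0,-1,0],
![0,0,-1,0,0,0],
![0,0,0,-1,0,-1],
![0,0,0,-1,0,0],
![0,0,0,0,-1,0],
![0,0,0,0,0,-1],
![0,0,0,0,0,1],
![0,0,0,0,1,0],
![0,0,0,1,0,0],
![0,0,0,1,0,1],
![0,0,1,0,0,0],
![0,0,1,0,1,0],
![0,1,0,0,0,0],
![1,0,0,0,0,0],
![1,0,0,1,0,0],
![1,0,0,1,0,1],
![1,0,1,0,0,0],
![1,0,1,0,1,0],
![1,0,1,1,0,0],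
![1,0,1,1,0,1],
![1,0,1,1,1,0],
![1,0,1,1,1,1],
![1,1,0,0,0,0],
![1,1,0,1,0,0],
![1,1,0,1,0,1],
![1,1,1,0,0,0],
![1,1,1,0,1,0],
![1,1,1,1,0,0],
![1,1,1,1,0,1],
![1,1,1,1,1,0],
![1,1,1,1,1,1],
![2,1,1,1,0,0],
![2,1,1,1,0,1],
![2,1,1,1,1,0],
![2,1,1,1,1,1],
![2,1,1,2,0,1],
![2,1,1,2,1,1],
![2,1,2,1,1,0],
![2,1,2,1,1,1],
![2,1,2,2,1,1],
![3,1,2,2,1,1],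
![3,2,2,2,1,1]]

lemma mem3 {a : ℤ} (h1 : -3 ≤ a) (h2 : a ≤ 3) : a ∈ ([-3,-2,-1,0,1,2,3] : List ℤ) := by
  simp only [List.mem_cons, List.not_mem_nil, or_false]; omega

lemma mem2 {a : ℤ} (h1 : -2 ≤ a) (h2 : a ≤ 2) : a ∈ ([-2,-1,0,1,2] : List ℤ) := by
  simp only [List.mem_cons, List.not_mem_nil, or_false]; omega

lemma mem1 {a : ℤ} (h1 : -1 ≤ a) (h2 : a ≤ 1) : a ∈ ([-1,0,1] : List ℤ) := by
  simp only [List.mem_cons, List.not_mem_nil, or_false]; omega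

lemma qE6_expand (x : Fin 6 → ℤ) :
    qE6 x = (x 0)^2 + (x 1)^2 + (x 2)^2 + (x 3)^2 + (x 4)^2 + (x 5)^2
      - x 0 * (x 1 + x 2 + x 3) - x 2 * x 4 - x 3 * x 5 := by
  simp [qE6, Fin.sum_univ_six]

set_option maxHeartbeats 2000000 in
lemma key : ∀ a ∈ ([-3,-2,-1,0,1,2,3] : List ℤ), ∀ b ∈ ([-2,-1,0,1,2] : List ℤ), ∀ c ∈ ([-2,-1,0,1,2] : List ℤ),
    ∀ d ∈ ([-2,-1,0,1,2] : List ℤ), ∀ e ∈ ([-1,0,1] : List ℤ), ∀ f ∈ ([-1,0,1] : List ℤ),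
    a^2 + b^2 + c^2 + d^2 + e^2 + f^2 - a * (b + c + d) - c * e - d * f = 1 →
    (![a,b,c,d,e,f] : Fin 6 → ℤ) ∈ sols := by decide


lemma eta6 (x : Fin 6 → ℤ) : x = ![x 0, x 1, x 2, x 3, x 4, x 5] := by
  funext i; fin_cases i <;> rfl

set_option maxHeartbeats 2000000 in
theorem qE6_card_solutions : {x : Fin 6 → ℤ | qE6 x = 1}.ncard = 72 := by
  have hset : {x : Fin 6 → ℤ | qE6 x = 1} = ↑sols.toFinset := by
    ext x
    simp only [Set.mem_setOf_eq, List.coe_toFinset, List.mem_toFinset, Finset.coe_sort_coe]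
    constructor
    · intro hq
      have hq' := (qE6_expand x).symm.trans hq
      have h0 : (x 0)^2 ≤ 12 := by
        nlinarith [sq_nonneg (11*x 0 - 6*x 1 - 6*x 2 - 6*x 3), sq_nonneg (8*x 1 - 3*x 2 - 3*x 3),
          sq_nonneg (5*x 2 - 3*x 3 - 4*x 4), sq_nonneg (4*x 3 - 3*x 4 - 5*x 5), sq_nonneg (x 4 - x 5)]
      have h1 : (x 1)^2 ≤ 4 := by
        nlinarith [sq_nonneg (2*x 0 - x 1 - x 2 - x 3), sq_nonneg (2*x 1 - x 2 - x 3),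
          sq_nonneg (5*x 2 - 3*x 3 - 4*x 4), sq_nonneg (4*x 3 - 3*x 4 - 5*x 5), sq_nonneg (x 4 - x 5)]
      have h2 : 3*(x 2)^2 ≤ 20 := by
        nlinarith [sq_nonneg (2*x 0 - x 1 - x 2 - x 3), sq_nonneg (3*x 1 - x 2 - x 3),
          sq_nonneg (31*x 2 - 20*x 3 - 30*x 4), sq_nonneg (28*x 3 - 20*x 4 - 31*x 5), sq_nonneg (4*x 4 - 5*x 5)]
      have h3 : 3*(x 3)^2 ≤ 20 := by
        nlinarith [sq_nonneg (2*x 0 - x 1 - x 2 - x 3), sq_nonneg (3*x 1 - x 2 - x 3),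
          sq_nonneg (4*x 2 - 2*x 3 - 3*x 4), sq_nonneg (7*x 3 - 5*x 4 - 10*x 5), sq_nonneg (5*x 4 - 4*x 5)]
      have h4 : 3*(x 4)^2 ≤ 8 := by
        nlinarith [sq_nonneg (2*x 0 - x 1 - x 2 - x 3), sq_nonneg (3*x 1 - x 2 - x 3),
          sq_nonneg (4*x 2 - 2*x 3 - 3*x 4), sq_nonneg (2*x 3 - x 4 - 2*x 5), sq_nonneg (x 4 - 2*x 5)]
      have h5 : 3*(x 5)^2 ≤ 8 := by
        nlinarith [sq_nonneg (2*x 0 - x 1 - x 2 - x 3), sq_nonneg (3*x 1 - x 2 - x 3),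
          sq_nonneg (4*x 2 - 2*x 3 - 3*x 4), sq_nonneg (2*x 3 - x 4 - 2*x 5), sq_nonneg (2*x 4 - x 5)]
      have b0l : -3 ≤ x 0 := by nlinarith [h0]
      have b0r : x 0 ≤ 3 := by nlinarith [h0]
      have b1l : -2 ≤ x 1 := by nlinarith [h1]
      have b1r : x 1 ≤ 2 := by nlinarith [h1]
      have b2l : -2 ≤ x 2 := by nlinarith [h2]
      have b2r : x 2 ≤ 2 := by nlinarith [h2]
      have b3l : -2 ≤ x 3 := by nlinarith [h3]
      have b3r : x 3 ≤ 2 := by nlinarith [h3]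
      have b4l : -1 ≤ x 4 := by nlinarith [h4]
      have b4r : x 4 ≤ 1 := by nlinarith [h4]
      have b5l : -1 ≤ x 5 := by nlinarith [h5]
      have b5r : x 5 ≤ 1 := by nlinarith [h5]
      rw [eta6 x]
      exact key _ (mem3 b0l b0r) _ (mem2 b1l b1r) _ (mem2 b2l b2r) _ (mem2 b3l b3r)
        _ (mem1 b4l b4r) _ (mem1 b5l b5r) (by linarith [hq'])
    · intro hx
      revert hx
      have h : ∀ v ∈ sols, v 0^2 + v 1^2 + v 2^2 + v 3^2 + v 4^2 + v 5^2
          - v 0 * (v 1 + v 2 + v 3) - v 2 * v 4 - v 3 * v 5 = 1 := by decide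
      intro hx
      rw [qE6_expand]
      exact h x hx
  rw [hset, Set.ncard_coe_finset]
  rw [List.toFinset_card_of_nodup (by decide)]
  rfl
end

section
/- For the affine tree D̃₄ with u = (2,1,1,1,1), every integer solution of q(x) = 1 has the form x = ±w + ku with k ∈ ℤ, where w is obtained from one of (2,1,1,1,0), (1,1,1,1,0), (1,1,1,0,0), (1,1,0,0,0), (1,0,0,0,0), (0,1,0,0,0) by permuting coordinates 2 through 5. -/
/-- The quadratic form of the affine tree `D̃₄`. -/
def qD4aff (x : Fin 5 → ℤ) : ℤ :=
  (∑ i, (x i)^2) - x 0 * (x 1 + x 2 + x 3 + x 4)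

lemma qD4aff_finish (x : Fin 5 → ℤ) (ε k c0 c1 c2 c3 c4 : ℤ) (hε : ε = 1 ∨ ε = -1)
    (h0 : ε * (x 0 - 2 * k) = c0) (h1 : ε * (x 1 - k) = c1) (h2 : ε * (x 2 - k) = c2)
    (h3 : ε * (x 3 - k) = c3) (h4 : ε * (x 4 - k) = c4)
    (hw : ((c0, ({c1,c2,c3,c4} : Multiset ℤ)) : ℤ × Multiset ℤ) ∈
      ([((2:ℤ), ({1,1,1,0} : Multiset ℤ)), (1, {1,1,1,0}), (1, {1,1,0,0}),
          (1, {1,0,0,0}), (1, {0,0,0,0}), (0, {1,0,0,0})] : List (ℤ × Multiset ℤ))) :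
    ∃ (ε k : ℤ), (ε = 1 ∨ ε = -1) ∧
      ∃ w ∈ ([((2:ℤ), ({1,1,1,0} : Multiset ℤ)), (1, {1,1,1,0}), (1, {1,1,0,0}),
          (1, {1,0,0,0}), (1, {0,0,0,0}), (0, {1,0,0,0})] : List (ℤ × Multiset ℤ)),
        ε * (x 0 - 2 * k) = w.1 ∧
        ({ε * (x 1 - k), ε * (x 2 - k), ε * (x 3 - k), ε * (x 4 - k)} : Multiset ℤ)
          = w.2 :=
  ⟨ε, k, hε, (c0, {c1,c2,c3,c4}), hw, by rw [h0], by rw [h1, h2, h3, h4]⟩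

set_option maxHeartbeats 4000000 in
theorem qD4aff_solutions (x : Fin 5 → ℤ) (hx : qD4aff x = 1) :
    ∃ (ε k : ℤ), (ε = 1 ∨ ε = -1) ∧
      ∃ w ∈ ([((2:ℤ), ({1,1,1,0} : Multiset ℤ)), (1, {1,1,1,0}), (1, {1,1,0,0}),
          (1, {1,0,0,0}), (1, {0,0,0,0}), (0, {1,0,0,0})] : List (ℤ × Multiset ℤ)),
        ε * (x 0 - 2 * k) = w.1 ∧
        ({ε * (x 1 - k), ε * (x 2 - k), ε * (x 3 - k), ε * (x 4 - k)} : Multiset ℤ)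
          = w.2 := by
  obtain ⟨a1, ha1⟩ : ∃ a, 2 * x 1 - x 0 = a := ⟨_, rfl⟩
  obtain ⟨a2, ha2⟩ : ∃ a, 2 * x 2 - x 0 = a := ⟨_, rfl⟩
  obtain ⟨a3, ha3⟩ : ∃ a, 2 * x 3 - x 0 = a := ⟨_, rfl⟩
  obtain ⟨a4, ha4⟩ : ∃ a, 2 * x 4 - x 0 = a := ⟨_, rfl⟩
  have h4q : a1*a1 + a2*a2 + a3*a3 + a4*a4 = 4 := by
    rw [← ha1, ← ha2, ← ha3, ← ha4]
    simp only [qD4aff, Fin.sum_univ_five] at hx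
    linear_combination 4 * hx
  have hb1l : -2 ≤ a1 := by nlinarith [mul_self_nonneg a2, mul_self_nonneg a3, mul_self_nonneg a4, mul_self_nonneg (a1+2)]
  have hb1u : a1 ≤ 2 := by nlinarith [mul_self_nonneg a2, mul_self_nonneg a3, mul_self_nonneg a4, mul_self_nonneg (a1-2)]
  have hb2l : -2 ≤ a2 := by nlinarith [mul_self_nonneg a1, mul_self_nonneg a3, mul_self_nonneg a4, mul_self_nonneg (a2+2)]
  have hb2u : a2 ≤ 2 := by nlinarith [mul_self_nonneg a1, mul_self_nonneg a3, mul_self_nonneg a4, mul_self_nonneg (a2-2)]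
  have hb3l : -2 ≤ a3 := by nlinarith [mul_self_nonneg a1, mul_self_nonneg a2, mul_self_nonneg a4, mul_self_nonneg (a3+2)]
  have hb3u : a3 ≤ 2 := by nlinarith [mul_self_nonneg a1, mul_self_nonneg a2, mul_self_nonneg a4, mul_self_nonneg (a3-2)]
  have hb4l : -2 ≤ a4 := by nlinarith [mul_self_nonneg a1, mul_self_nonneg a2, mul_self_nonneg a3, mul_self_nonneg (a4+2)]
  have hb4u : a4 ≤ 2 := by nlinarith [mul_self_nonneg a1, mul_self_nonneg a2, mul_self_nonneg a3, mul_self_nonneg (a4-2)]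
  interval_cases a1 <;> interval_cases a2 <;> interval_cases a3 <;> interval_cases a4 <;>
    first
    | omega
    | exact qD4aff_finish x 1 ((x 0 - 1)/2) 1 0 0 0 0 (Or.inl rfl) (by omega) (by omega) (by omega) (by omega) (by omega) (by decide)
    | exact qD4aff_finish x 1 ((x 0 - 1)/2) 1 0 0 0 1 (Or.inl rfl) (by omega) (by omega) (by omega) (by omega) (by omega) (by decide)
    | exact qD4aff_finish x 1 ((x 0 - 1)/2) 1 0 0 1 0 (Or.inl rfl) (by omega) (by omega) (by omega) (by omega) (by omega) (by decide)
    | exact qD4aff_finish x 1 ((x 0 - 1)/2) 1 0 0 1 1 (Or.inl rfl) (by omega) (by omega) (by omega) (by omega) (by omega) (by decide)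
    | exact qD4aff_finish x 1 ((x 0 - 1)/2) 1 0 1 0 0 (Or.inl rfl) (by omega) (by omega) (by omega) (by omega) (by omega) (by decide)
    | exact qD4aff_finish x 1 ((x 0 - 1)/2) 1 0 1 0 1 (Or.inl rfl) (by omega) (by omega) (by omega) (by omega) (by omega) (by decide)
    | exact qD4aff_finish x 1 ((x 0 - 1)/2) 1 0 1 1 0 (Or.inl rfl) (by omega) (by omega) (by omega) (by omega) (by omega) (by decide)
    | exact qD4aff_finish x 1 ((x 0 - 1)/2) 1 0 1 1 1 (Or.inl rfl) (by omega) (by omega) (by omega) (by omega) (by omega) (by decide)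
    | exact qD4aff_finish x 1 ((x 0 - 1)/2) 1 1 0 0 0 (Or.inl rfl) (by omega) (by omega) (by omega) (by omega) (by omega) (by decide)
    | exact qD4aff_finish x 1 ((x 0 - 1)/2) 1 1 0 0 1 (Or.inl rfl) (by omega) (by omega) (by omega) (by omega) (by omega) (by decide)
    | exact qD4aff_finish x 1 ((x 0 - 1)/2) 1 1 0 1 0 (Or.inl rfl) (by omega) (by omega) (by omega) (by omega) (by omega) (by decide)
    | exact qD4aff_finish x 1 ((x 0 - 1)/2) 1 1 0 1 1 (Or.inl rfl) (by omega) (by omega) (by omega) (by omega) (by omega) (by decide)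
    | exact qD4aff_finish x 1 ((x 0 - 1)/2) 1 1 1 0 0 (Or.inl rfl) (by omega) (by omega) (by omega) (by omega) (by omega) (by decide)
    | exact qD4aff_finish x 1 ((x 0 - 1)/2) 1 1 1 0 1 (Or.inl rfl) (by omega) (by omega) (by omega) (by omega) (by omega) (by decide)
    | exact qD4aff_finish x 1 ((x 0 - 1)/2) 1 1 1 1 0 (Or.inl rfl) (by omega) (by omega) (by omega) (by omega) (by omega) (by decide)
    | exact qD4aff_finish x (-1) ((x 0 + 1)/2) 1 0 0 0 0 (Or.inr rfl) (by omega) (by omega) (by omega) (by omega) (by omega) (by decide)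
    | exact qD4aff_finish x 1 (x 0 / 2) 0 1 0 0 0 (Or.inl rfl) (by omega) (by omega) (by omega) (by omega) (by omega) (by decide)
    | exact qD4aff_finish x (-1) (x 0 / 2) 0 1 0 0 0 (Or.inr rfl) (by omega) (by omega) (by omega) (by omega) (by omega) (by decide)
    | exact qD4aff_finish x 1 (x 0 / 2) 0 0 1 0 0 (Or.inl rfl) (by omega) (by omega) (by omega) (by omega) (by omega) (by decide)
    | exact qD4aff_finish x (-1) (x 0 / 2) 0 0 1 0 0 (Or.inr rfl) (by omega) (by omega) (by omega) (by omega) (by omega) (by decide)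
    | exact qD4aff_finish x 1 (x 0 / 2) 0 0 0 1 0 (Or.inl rfl) (by omega) (by omega) (by omega) (by omega) (by omega) (by decide)
    | exact qD4aff_finish x (-1) (x 0 / 2) 0 0 0 1 0 (Or.inr rfl) (by omega) (by omega) (by omega) (by omega) (by omega) (by decide)
    | exact qD4aff_finish x 1 (x 0 / 2) 0 0 0 0 1 (Or.inl rfl) (by omega) (by omega) (by omega) (by omega) (by omega) (by decide)
    | exact qD4aff_finish x (-1) (x 0 / 2) 0 0 0 0 1 (Or.inr rfl) (by omega) (by omega) (by omega) (by omega) (by omega) (by decide)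
end

section
/- Let Φ be an n×n complex matrix whose Jordan normal form has no Jordan block of size greater than one for any eigenvalue of modulus one, and let v ∈ ℂⁿ. Then the sequence (Φᵏ v)_{k∈ℕ} is either bounded, or there exist constants h > 1, c > 0, d ≥ 0 such that ‖Φᵏ v‖ ≥ c·hᵏ − d for all k ∈ ℕ. -/
/-!
Decompose `v` along the generalized eigenspaces of `f`. The components for eigenvalues with
`‖μ‖ < 1` are `O(r ^ k)` for every `r > ‖μ‖`, hence bounded, and by the hypothesis on Jordan blocks
the components for `‖μ‖ = 1` are genuine eigenvectors, whose orbits have constant norm. If some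
eigenvalue with `‖μ‖ > 1` has a nonzero component, composing the spectral projection onto its
generalized eigenspace with a suitable power of `f - μ` gives a map `T` commuting with `f` that
sends `v` to an eigenvector `u`, and then `‖T‖ * ‖f ^ k v‖ ≥ ‖T (f ^ k v)‖ = ‖μ‖ ^ k * ‖u‖`.
-/

namespace Module.End

theorem apply_eq_smul_of_ker_sq_le {K V : Type*} [Field K] [AddCommGroup V] [Module K V]
    {f : End K V} {μ : K} (h : LinearMap.ker ((f - μ • 1) ^ 2) ≤ LinearMap.ker (f - μ • 1))
    {x : V} (hx : x ∈ f.maxGenEigenspace μ) : f x = μ • x := by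
  obtain ⟨m, hm⟩ := (mem_maxGenEigenspace f μ x).1 hx
  have hstable : LinearMap.ker ((f - μ • 1) ^ 1) = LinearMap.ker ((f - μ • 1) ^ 2) :=
    le_antisymm (LinearMap.ker_le_ker_comp _ _) (by rwa [pow_one])
  have hx₁ : x ∈ LinearMap.ker ((f - μ • 1) ^ 1) := by
    rw [ker_pow_constant hstable m, LinearMap.mem_ker, pow_add, mul_apply, hm, map_zero]
  simpa [sub_eq_zero] using hx₁

section Growth

variable {𝕜 E : Type*} [NormedField 𝕜] [SeminormedAddCommGroup E] [NormedSpace 𝕜 E]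
  {f : End 𝕜 E} {μ : 𝕜} {x : E}

theorem norm_pow_apply_of_apply_eq_smul (hx : f x = μ • x) (k : ℕ) :
    ‖(f ^ k) x‖ = ‖μ‖ ^ k * ‖x‖ := by
  induction k with
  | zero => simp
  | succ k ih => rw [pow_succ, mul_apply, hx, map_smul, norm_smul, ih, pow_succ]; ring

theorem exists_norm_pow_apply_le_of_mem_maxGenEigenspace {r : ℝ} (hr : ‖μ‖ < r)
    (hx : x ∈ f.maxGenEigenspace μ) : ∃ C, ∀ k, ‖(f ^ k) x‖ ≤ C * r ^ k := by
  obtain ⟨m, hm⟩ := (mem_maxGenEigenspace f μ x).1 hx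
  clear hx
  induction m generalizing x with
  | zero => exact ⟨0, fun k => by simp_all⟩
  | succ m ih =>
    set y := (f - μ • 1) x
    obtain ⟨C, hC⟩ := ih (x := y) (by rwa [← mul_apply, ← pow_succ])
    -- `K` is chosen so that `‖μ‖ * K + C ≤ r * K`, which propagates `‖(f ^ k) x‖ ≤ K * r ^ k`.
    set K : ℝ := max ‖x‖ (C / (r - ‖μ‖))
    have hK : C ≤ K * (r - ‖μ‖) := (div_le_iff₀ (sub_pos.2 hr)).1 (le_max_right _ _)
    refine ⟨K, fun k => ?_⟩
    induction k with
    | zero => simp only [pow_zero, one_apply, mul_one]; exact le_max_left _ _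
    | succ k ihk =>
      have hrk : 0 ≤ r ^ k := pow_nonneg ((norm_nonneg μ).trans hr.le) k
      have hsplit : (f ^ (k + 1)) x = μ • (f ^ k) x + (f ^ k) y := by
        rw [pow_succ, mul_apply, show f x = μ • x + y by simp [y], map_add, map_smul]
      calc ‖(f ^ (k + 1)) x‖ ≤ ‖μ‖ * ‖(f ^ k) x‖ + ‖(f ^ k) y‖ := by
            rw [hsplit, ← norm_smul]; exact norm_add_le _ _
        _ ≤ ‖μ‖ * (K * r ^ k) + C * r ^ k :=
            add_le_add (mul_le_mul_of_nonneg_left ihk (norm_nonneg μ)) (hC k)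
        _ ≤ K * r ^ (k + 1) := by rw [pow_succ]; nlinarith

theorem exists_norm_pow_apply_le_of_norm_le_one (hμ : ‖μ‖ ≤ 1)
    (hf : ‖μ‖ = 1 → LinearMap.ker ((f - μ • 1) ^ 2) ≤ LinearMap.ker (f - μ • 1))
    (hx : x ∈ f.maxGenEigenspace μ) : ∃ C, ∀ k : ℕ, ‖(f ^ k) x‖ ≤ C := by
  rcases hμ.lt_or_eq with hμ | hμ
  · obtain ⟨C, hC⟩ := exists_norm_pow_apply_le_of_mem_maxGenEigenspace hμ hx
    exact ⟨C, fun k => by simpa using hC k⟩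
  · refine ⟨‖x‖, fun k => ?_⟩
    rw [norm_pow_apply_of_apply_eq_smul (apply_eq_smul_of_ker_sq_le (hf hμ) hx), hμ, one_pow,
      one_mul]

end Growth

theorem exists_pos_mul_pow_le_norm_pow_apply {𝕜 E : Type*} [NontriviallyNormedField 𝕜]
    [CompleteSpace 𝕜] [NormedAddCommGroup E] [NormedSpace 𝕜 E] [FiniteDimensional 𝕜 E]
    {f T : End 𝕜 E} {μ : 𝕜} {v : E} (hfT : Commute f T) (hTv : f (T v) = μ • T v)
    (hTv₀ : T v ≠ 0) : ∃ c > 0, ∀ k : ℕ, c * ‖μ‖ ^ k ≤ ‖(f ^ k) v‖ := by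
  obtain ⟨C, hC₀, hC⟩ := (LinearMap.toContinuousLinearMap T).bound
  refine ⟨‖T v‖ / C, by positivity, fun k => ?_⟩
  rw [div_mul_eq_mul_div, div_le_iff₀ hC₀]
  calc ‖T v‖ * ‖μ‖ ^ k = ‖T ((f ^ k) v)‖ := by
        rw [← mul_apply, ← (hfT.pow_left k).eq, mul_apply,
          norm_pow_apply_of_apply_eq_smul hTv, mul_comm]
    _ ≤ C * ‖(f ^ k) v‖ := hC _
    _ = ‖(f ^ k) v‖ * C := mul_comm _ _

theorem commute_projection_of_mapsTo {R E : Type*} [Ring R] [AddCommGroup E] [Module R E]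
    {f : End R E} {p q : Submodule R E} (hpq : IsCompl p q) (hp : Set.MapsTo f p p)
    (hq : Set.MapsTo f q q) : Commute f (p.projection q hpq) :=
  ((LinearMap.IsIdempotentElem.commute_iff (Submodule.isIdempotentElem_projection hpq)).2
    ⟨by rwa [Submodule.range_projection], by rwa [Submodule.ker_projection]⟩).symm

theorem exists_pow_apply_ne_zero_and_apply_pow_apply_eq_zero {R E : Type*} [Semiring R]
    [AddCommMonoid E] [Module R E] {g : End R E} {x : E} {m : ℕ} (hx : x ≠ 0)
    (hm : (g ^ m) x = 0) : ∃ s, (g ^ s) x ≠ 0 ∧ g ((g ^ s) x) = 0 := by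
  classical
  have hex : ∃ m, (g ^ m) x = 0 := ⟨m, hm⟩
  obtain ⟨s, hs⟩ : ∃ s, Nat.find hex = s + 1 :=
    Nat.exists_eq_add_one.2 (Nat.pos_of_ne_zero fun h => hx (by simpa [h] using Nat.find_spec hex))
  refine ⟨s, Nat.find_min hex (by omega), ?_⟩
  rw [← mul_apply, ← pow_succ', ← hs]
  exact Nat.find_spec hex

section Spectral

variable {K V : Type*} [Field K] [IsAlgClosed K] [AddCommGroup V] [Module K V]
  [FiniteDimensional K V] (f : End K V) (μ : K)

theorem isCompl_maxGenEigenspace_iSup_ne :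
    IsCompl (f.maxGenEigenspace μ) (⨆ (ν) (_ : ν ≠ μ), f.maxGenEigenspace ν) where
  disjoint := f.independent_maxGenEigenspace.disjoint_biSup (y := {μ}ᶜ) (by simp)
  codisjoint := codisjoint_iff.2 <| by
    rw [← f.iSup_maxGenEigenspace_eq_top, iSup_split_single f.maxGenEigenspace μ]

noncomputable def maxGenEigenspaceProj : End K V :=
  (f.maxGenEigenspace μ).projection _ (f.isCompl_maxGenEigenspace_iSup_ne μ)

theorem commute_maxGenEigenspaceProj : Commute f (f.maxGenEigenspaceProj μ) :=
  commute_projection_of_mapsTo _ (mapsTo_maxGenEigenspace_of_comm (Commute.refl f) μ)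
    (LinearMap.mapsTo_biSup_of_mapsTo {μ}ᶜ fun ν =>
      mapsTo_maxGenEigenspace_of_comm (Commute.refl f) ν)

theorem maxGenEigenspaceProj_finsupp_sum {c : K →₀ V} (hc : ∀ ν, c ν ∈ f.maxGenEigenspace ν) :
    f.maxGenEigenspaceProj μ (c.sum fun _ x => x) = c μ := by
  rw [Finsupp.sum, map_sum, Finset.sum_eq_single μ]
  · exact Submodule.projection_apply_of_mem_left _ (hc μ)
  · intro ν _ hν
    exact (Submodule.projection_apply_eq_zero_iff _).2
      (Submodule.mem_iSup_of_mem ν (Submodule.mem_iSup_of_mem hν (hc ν)))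
  · intro hμ
    rw [Finsupp.notMem_support_iff.1 hμ, map_zero]

theorem maxGenEigenspaceProj_apply_mem (x : V) :
    f.maxGenEigenspaceProj μ x ∈ f.maxGenEigenspace μ :=
  Submodule.projection_apply_mem _ x

end Spectral

section Dichotomy

variable {𝕜 E : Type*} [NontriviallyNormedField 𝕜] [CompleteSpace 𝕜] [IsAlgClosed 𝕜]
  [NormedAddCommGroup E] [NormedSpace 𝕜 E] [FiniteDimensional 𝕜 E] {f : End 𝕜 E} {μ : 𝕜}

theorem exists_pos_mul_pow_le_norm_pow_apply_of_maxGenEigenspaceProj_ne_zero {v : E}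
    (hv : f.maxGenEigenspaceProj μ v ≠ 0) : ∃ c > 0, ∀ k : ℕ, c * ‖μ‖ ^ k ≤ ‖(f ^ k) v‖ := by
  obtain ⟨m, hm⟩ := (mem_maxGenEigenspace f μ _).1 (f.maxGenEigenspaceProj_apply_mem μ v)
  obtain ⟨s, hs₀, hs⟩ := exists_pow_apply_ne_zero_and_apply_pow_apply_eq_zero hv hm
  have hfN : Commute f (f - μ • 1) :=
    (Commute.refl f).sub_right ((Commute.one_right f).smul_right μ)
  refine exists_pos_mul_pow_le_norm_pow_apply
    ((hfN.pow_right s).mul_right (f.commute_maxGenEigenspaceProj μ)) ?_ hs₀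
  rwa [LinearMap.sub_apply, LinearMap.smul_apply, one_apply, sub_eq_zero] at hs

theorem exists_bound_or_exists_exponential_lower_bound
    (hf : ∀ μ : 𝕜, ‖μ‖ = 1 → LinearMap.ker ((f - μ • 1) ^ 2) ≤ LinearMap.ker (f - μ • 1))
    (v : E) : (∃ C, ∀ k : ℕ, ‖(f ^ k) v‖ ≤ C) ∨
      ∃ h c : ℝ, 1 < h ∧ 0 < c ∧ ∀ k : ℕ, c * h ^ k ≤ ‖(f ^ k) v‖ := by
  obtain ⟨c, hc, rfl⟩ := (Submodule.mem_iSup_iff_exists_finsupp _ v).1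
    (f.iSup_maxGenEigenspace_eq_top ▸ Submodule.mem_top)
  by_cases H : ∀ μ : 𝕜, 1 < ‖μ‖ → c μ = 0
  · left
    have hbdd (μ : 𝕜) : ∃ C, ∀ k : ℕ, ‖(f ^ k) (c μ)‖ ≤ C := by
      rcases le_or_gt ‖μ‖ 1 with hμ | hμ
      · exact exists_norm_pow_apply_le_of_norm_le_one hμ (hf μ) (hc μ)
      · exact ⟨0, fun k => by simp [H μ hμ]⟩
    choose C hC using hbdd
    refine ⟨∑ μ ∈ c.support, C μ, fun k => ?_⟩
    rw [Finsupp.sum, map_sum]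
    exact (norm_sum_le _ _).trans (Finset.sum_le_sum fun μ _ => hC μ k)
  · right
    push Not at H
    obtain ⟨μ, hμ, hcμ⟩ := H
    obtain ⟨c₀, hc₀, hgrowth⟩ :=
      exists_pos_mul_pow_le_norm_pow_apply_of_maxGenEigenspaceProj_ne_zero (μ := μ)
        (by rwa [maxGenEigenspaceProj_finsupp_sum f μ hc])
    exact ⟨‖μ‖, c₀, hμ, hc₀, hgrowth⟩

end Dichotomy

end Module.End

theorem bounded_or_exponential {n : ℕ} (Φ : Matrix (Fin n) (Fin n) ℂ)
    (hJordan : ∀ lam : ℂ, ‖lam‖ = 1 →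
      ∀ w : Fin n → ℂ, ((Φ - lam • 1)^2).mulVec w = 0 → (Φ - lam • 1).mulVec w = 0)
    (v : Fin n → ℂ) :
    (∃ C : ℝ, ∀ k : ℕ, ‖(Φ^k).mulVec v‖ ≤ C) ∨
      (∃ h c d : ℝ, 1 < h ∧ 0 < c ∧ 0 ≤ d ∧
        ∀ k : ℕ, c * h^k - d ≤ ‖(Φ^k).mulVec v‖) := by
  have hmulVec (A : Matrix (Fin n) (Fin n) ℂ) (w : Fin n → ℂ) :
      A.mulVec w = Matrix.toLinAlgEquiv' A w := (Matrix.toLinAlgEquiv'_apply A w).symm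
  simp only [hmulVec, map_pow, map_sub, map_smul, map_one] at hJordan ⊢
  refine (Module.End.exists_bound_or_exists_exponential_lower_bound
    (fun μ hμ w hw => hJordan μ hμ w hw) v).imp_right ?_
  rintro ⟨h, c, hh, hc, hgrowth⟩
  exact ⟨h, c, 0, hh, hc, le_rfl, fun k => by simpa using hgrowth k⟩
end

section
/- Let (v_k)_{k∈ℕ} be a sequence of pairwise distinct vectors in ℂⁿ with ‖v_k‖ ≤ ak + b for constants a > 0, b ≥ 0, and let Φ be an n×n complex matrix such that every Φ-orbit {Φᵏw : k ∈ ℕ} is either finite or satisfies ‖Φᵏw‖ ≥ c·hᵏ − d for constants h > 1, c > 0, d ≥ 0 independent of w in a given finite set. Then no finite union of Φ-orbits of members of the sequence can contain the whole set {v_k : k ∈ ℕ}. -/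
/-!
Among `v 0, …, v N` (all of norm `≤ |a| N + b`) some orbit must contain more than `N / #s`
points. A finite orbit has boundedly many points, and an orbit whose `k`-th point has norm at
least `c hᵏ - d` reaches norm `≥ c h^T - d` within any `T + 1` of its points. Taking
`N = #s * T` with `T` so large that `c h^T - d` beats `|a| #s T + b`, both cases are impossible.
-/

open Filter Topology

theorem eventually_linear_lt_const_mul_pow_sub {h c : ℝ} (hh : 1 < h) (hc : 0 < c) (d A B : ℝ) :
    ∀ᶠ n : ℕ in atTop, A * n + B < c * h ^ n - d := by
  have hlim : Tendsto (fun n : ℕ => A * ((n : ℝ) ^ 1 / h ^ n) + (B + d) * (h ^ n)⁻¹) atTop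
      (𝓝 (A * 0 + (B + d) * 0)) :=
    ((tendsto_pow_const_div_const_pow_of_one_lt 1 hh).const_mul A).add
      ((tendsto_pow_atTop_atTop_of_one_lt hh).inv_tendsto_atTop.const_mul (B + d))
  filter_upwards [hlim.eventually (gt_mem_nhds (by simpa using hc))] with n hn
  have hpos : 0 < h ^ n := pow_pos (by linarith) n
  rw [pow_one, mul_div_assoc', ← div_eq_mul_inv, ← add_div, div_lt_iff₀ hpos] at hn
  linarith

section Orbits

variable {E : Type*} [Norm E] {f : ℕ → E} {g : ℕ → ℝ}

theorem exists_le_norm_of_card_lt (hg : Monotone g) (hf : ∀ k, g k ≤ ‖f k‖) {S : Finset E}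
    (hS : ↑S ⊆ Set.range f) {T : ℕ} (hT : T < S.card) : ∃ x ∈ S, g T ≤ ‖x‖ := by
  classical
  by_contra! hsmall
  have hsub : S ⊆ (Finset.range T).image f := by
    intro x hx
    obtain ⟨k, rfl⟩ := hS hx
    refine Finset.mem_image_of_mem f (Finset.mem_range.2 (lt_of_not_ge fun hTk => ?_))
    exact (hsmall _ hx).not_ge ((hg hTk).trans (hf k))
  have := (Finset.card_le_card hsub).trans Finset.card_image_le
  rw [Finset.card_range] at this
  omega

/-- `Set.ncard` is `0` on infinite sets, so `hfin` only constrains a finite range. -/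
theorem card_le_of_subset_range_of_norm_le (hg : Monotone g)
    (hf : (Set.range f).Finite ∨ ∀ k, g k ≤ ‖f k‖) {T : ℕ} (hfin : (Set.range f).ncard ≤ T)
    {R : ℝ} (hR : R < g T) {S : Finset E} (hS : ↑S ⊆ Set.range f) (hSR : ∀ x ∈ S, ‖x‖ ≤ R) :
    S.card ≤ T := by
  rcases hf with hfinite | hgrow
  · calc S.card = (S : Set E).ncard := (Set.ncard_coe_finset S).symm
      _ ≤ (Set.range f).ncard := Set.ncard_le_ncard hS hfinite
      _ ≤ T := hfin
  · by_contra! hT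
    obtain ⟨x, hx, hgx⟩ := exists_le_norm_of_card_lt hg hgrow hS hT
    linarith [hSR x hx]

theorem not_range_subset_biUnion_range {ι : Type*} {v : ℕ → E} (hv : Function.Injective v)
    {a b : ℝ} (hgrowth : ∀ k : ℕ, ‖v k‖ ≤ a * k + b) (hg : Monotone g)
    (hsuper : ∀ A B : ℝ, ∀ᶠ n : ℕ in atTop, A * n + B < g n) (f : ι → ℕ → E) (s : Finset ι)
    (hf : ∀ i ∈ s, (Set.range (f i)).Finite ∨ ∀ k, g k ≤ ‖f i k‖) :
    ¬ Set.range v ⊆ ⋃ i ∈ s, Set.range (f i) := by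
  classical
  intro hcover
  choose idx hidx hmem using fun k =>
    (by simpa using hcover (Set.mem_range_self k) : ∃ i ∈ s, v k ∈ Set.range (f i))
  obtain ⟨T, hTB, hT⟩ := ((eventually_ge_atTop (s.sup fun i => (Set.range (f i)).ncard)).and
    (hsuper (|a| * s.card) b)).exists
  set N := s.card * T
  obtain ⟨i, hi, hfiber⟩ := Finset.exists_lt_card_fiber_of_mul_lt_card_of_maps_to
    (s := Finset.range (N + 1)) (n := T) (fun k _ => hidx k) (by simp [N])
  have hsmall := card_le_of_subset_range_of_norm_le hg (hf i hi)
    ((Finset.le_sup (f := fun i => (Set.range (f i)).ncard) hi).trans hTB)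
    (R := |a| * N + b) (by rwa [Nat.cast_mul, ← mul_assoc])
    (S := {k ∈ Finset.range (N + 1) | idx k = i}.image v) ?_ ?_
  · rw [Finset.card_image_of_injective _ hv] at hsmall
    omega
  · intro x hx
    obtain ⟨k, hk, rfl⟩ := Finset.mem_image.1 hx
    exact (Finset.mem_filter.1 hk).2 ▸ hmem k
  · intro x hx
    obtain ⟨k, hk, rfl⟩ := Finset.mem_image.1 hx
    have hkN : (k : ℝ) ≤ N := by
      exact_mod_cast Nat.lt_succ_iff.1 (Finset.mem_range.1 (Finset.mem_filter.1 hk).1)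
    calc ‖v k‖ ≤ a * k + b := hgrowth k
      _ ≤ |a| * N + b := by gcongr; exact (le_abs_self a).trans (by gcongr)

end Orbits

theorem no_finite_orbit_cover_general {n : ℕ} (Φ : Matrix (Fin n) (Fin n) ℂ)
    (v : ℕ → (Fin n → ℂ)) (hv : Function.Injective v)
    (a b : ℝ) (hgrowth : ∀ k : ℕ, ‖v k‖ ≤ a * k + b)
    (s : Finset ℕ)
    (horb : ∃ h c d : ℝ, 1 < h ∧ 0 < c ∧ 0 ≤ d ∧
      ∀ i ∈ s, ({w : Fin n → ℂ | ∃ k : ℕ, w = (Φ^k).mulVec (v i)}.Finite ∨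
        ∀ k : ℕ, c * h^k - d ≤ ‖(Φ^k).mulVec (v i)‖)) :
    ¬ ({x : Fin n → ℂ | ∃ k : ℕ, x = v k} ⊆
        ⋃ i ∈ s, {w : Fin n → ℂ | ∃ k : ℕ, w = (Φ^k).mulVec (v i)}) := by
  obtain ⟨h, c, d, hh, hc, -, horb⟩ := horb
  have hrange : ∀ u : ℕ → Fin n → ℂ, {x | ∃ k, x = u k} = Set.range u := fun u => by
    ext; simp [eq_comm]
  have hmono : Monotone fun k : ℕ => c * h ^ k - d := fun _ _ hjk =>
    sub_le_sub_right (mul_le_mul_of_nonneg_left (pow_le_pow_right₀ hh.le hjk) hc.le) d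
  have := not_range_subset_biUnion_range hv hgrowth hmono
    (fun A B => eventually_linear_lt_const_mul_pow_sub hh hc d A B)
    (fun i k => (Φ ^ k).mulVec (v i)) s (fun i hi => by simpa only [← hrange] using horb i hi)
  simpa only [← hrange] using this

theorem no_finite_orbit_cover {n : ℕ} (Φ : Matrix (Fin n) (Fin n) ℂ)
    (v : ℕ → (Fin n → ℂ)) (hv : Function.Injective v)
    (a b : ℝ) (ha : 0 < a) (hb : 0 ≤ b) (hgrowth : ∀ k : ℕ, ‖v k‖ ≤ a * k + b)
    (s : Finset ℕ)
    (horb : ∃ h c d : ℝ, 1 < h ∧ 0 < c ∧ 0 ≤ d ∧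
      ∀ i ∈ s, ({w : Fin n → ℂ | ∃ k : ℕ, w = (Φ^k).mulVec (v i)}.Finite ∨
        ∀ k : ℕ, c * h^k - d ≤ ‖(Φ^k).mulVec (v i)‖)) :
    ¬ ({x : Fin n → ℂ | ∃ k : ℕ, x = v k} ⊆
        ⋃ i ∈ s, {w : Fin n → ℂ | ∃ k : ℕ, w = (Φ^k).mulVec (v i)}) :=
  no_finite_orbit_cover_general Φ v hv a b hgrowth s horb
end
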